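/- Decomposition of second-interval incidence among the time-1 unexposed. Assume Consistency, Exposure necessity, Treatment exchangeability, Positivity, and Exposure exchangeability. Then for each a ∈ {0,1}: E[ΔY2 · 1{E1 = 0} | A = a] = E[Y2[a,1]] · P(E2[a,0] = 1 and E1[a] = 0). -/

import Mathlib

open MeasureTheory ProbabilityTheory
open scoped ProbabilityTheory

/-!
On `{A = a}`, consistency and exposure necessity make `ΔY2 · 1{E1 = 0}` almost surely the
indicator of `{E2[a,0] = 1, E1[a] = 0, Y2[a,1] = 1}`, an event about potential outcomes only.
Treatment exchangeability therefore removes the conditioning on `{A = a}`, and exposure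
exchangeability factors the probability of the event: given `E2[a,0] = 1`, `Y2[a,1]` is
independent of `E1[a]`, and it is independent of `E2[a,0]` itself.
-/

lemma eq_indicator_one_of_forall_eq_zero_or_eq_one {Ω : Type*} {f : Ω → ℝ}
    (hf : ∀ ω, f ω = 0 ∨ f ω = 1) : f = {ω | f ω = 1}.indicator 1 := by
  funext ω
  rcases hf ω with h | h <;> simp [h]

section

variable {Ω : Type*} [MeasurableSpace Ω] {μ : Measure Ω}

lemma integral_eq_measureReal_of_forall_eq_zero_or_eq_one {f : Ω → ℝ} (hfm : Measurable f)
    (hf : ∀ ω, f ω = 0 ∨ f ω = 1) : ∫ ω, f ω ∂μ = μ.real {ω | f ω = 1} := by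
  conv_lhs => rw [eq_indicator_one_of_forall_eq_zero_or_eq_one hf]
  exact integral_indicator_one (hfm (measurableSet_singleton 1))

lemma setIntegral_cond_eq_measureReal_of_ae_eq_indicator {s t u : Set Ω} {f : Ω → ℝ}
    (hs : MeasurableSet s) (ht : MeasurableSet t) (hu : MeasurableSet u)
    (hf : ∀ᵐ ω ∂μ, ω ∈ s → t.indicator f ω = u.indicator 1 ω) :
    ∫ ω in t, f ω ∂μ[|s] = (μ[|s]).real u := by
  rw [← integral_indicator ht, ← integral_indicator_one hu]
  refine integral_congr_ae ?_
  filter_upwards [cond_absolutelyContinuous.ae_le hf, ae_cond_mem hs] with ω hω hs using hω hs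

lemma ProbabilityTheory.IndepFun.cond_preimage_eq {α β : Type*} [MeasurableSpace α]
    [MeasurableSpace β] [IsFiniteMeasure μ] {X : Ω → α} {Y : Ω → β} (h : IndepFun X Y μ)
    (hX : Measurable X) {s : Set α} {t : Set β} (hs : MeasurableSet s) (ht : MeasurableSet t)
    (hXs : μ (X ⁻¹' s) ≠ 0) :
    μ[Y ⁻¹' t | X ⁻¹' s] = μ (Y ⁻¹' t) := by
  rw [cond_apply (hX hs), h.measure_inter_preimage_eq_mul s t hs ht, ← mul_assoc,
    ENNReal.inv_mul_cancel hXs (measure_ne_top _ _), one_mul]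

lemma measure_inter_inter_eq_mul_of_cond_eq_mul [IsFiniteMeasure μ] {c s t : Set Ω}
    (hc : MeasurableSet c) (hcond : μ[s ∩ t | c] = μ[s | c] * μ[t | c])
    (hindep : μ (c ∩ t) = μ c * μ t) :
    μ (c ∩ s ∩ t) = μ (c ∩ s) * μ t := by
  rcases eq_or_ne (μ c) 0 with hc0 | hc0
  · simp [measure_mono_null (Set.inter_subset_left.trans Set.inter_subset_left) hc0,
      measure_mono_null Set.inter_subset_left hc0]
  have hct : μ[t | c] = μ t := by
    rw [cond_apply hc, hindep, ← mul_assoc, ENNReal.inv_mul_cancel hc0 (measure_ne_top _ _),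
      one_mul]
  rw [hct, cond_apply hc, cond_apply hc, mul_assoc, ← Set.inter_assoc] at hcond
  exact (ENNReal.mul_right_inj (ENNReal.inv_ne_zero.mpr (measure_ne_top _ _))
    (ENNReal.inv_ne_top.mpr hc0)).mp hcond

lemma indicator_unexposed_ae_eq {A E1 E2 DY2 E1a E2a Y2a : Ω → ℝ} {a : ℝ}
    (hE2r : ∀ ω, E2 ω = 0 ∨ E2 ω = 1) (hY2ar : ∀ ω, Y2a ω = 0 ∨ Y2a ω = 1)
    (hconsE1 : ∀ᵐ ω ∂μ, A ω = a → E1 ω = E1a ω)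
    (hconsE2 : ∀ᵐ ω ∂μ, A ω = a → E1 ω = 0 → E2 ω = E2a ω)
    (hconsY2 : ∀ᵐ ω ∂μ, A ω = a → E1 ω = 0 → E2 ω = 1 → DY2 ω = Y2a ω)
    (hnecE2 : ∀ᵐ ω ∂μ, E2 ω = 0 → DY2 ω = 0) :
    ∀ᵐ ω ∂μ, ω ∈ {ω | A ω = a} → {ω | E1 ω = 0}.indicator DY2 ω =
      ({ω | E2a ω = 1} ∩ {ω | E1a ω = 0} ∩ {ω | Y2a ω = 1}).indicator 1 ω := by
  filter_upwards [hconsE1, hconsE2, hconsY2, hnecE2] with ω hE1 hE2 hY2 hnec (hA : A ω = a)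
  by_cases h1 : E1 ω = 0
  · have h1a : E1a ω = 0 := hE1 hA ▸ h1
    rcases hE2r ω with h2 | h2
    · have h2a : E2a ω ≠ 1 := by rw [← hE2 hA h1, h2]; norm_num
      simp [h1, hnec h2, h2a]
    · have h2a : E2a ω = 1 := hE2 hA h1 ▸ h2
      rcases hY2ar ω with hy | hy <;> simp [h1, h1a, h2a, hY2 hA h1 h2, hy]
  · have h1a : E1a ω ≠ 0 := hE1 hA ▸ h1
    simp [h1, h1a]

/-- `E1a`, `E2a`, `Y2a` stand for the potential outcomes `E1[a]`, `E2[a,0]`, `Y2[a,1]`. -/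
theorem setIntegral_cond_unexposed_eq [IsFiniteMeasure μ] {A E1 E2 DY2 E1a E2a Y2a : Ω → ℝ}
    {a : ℝ} (hAm : Measurable A) (hE1m : Measurable E1) (hE1am : Measurable E1a)
    (hE2am : Measurable E2a) (hY2am : Measurable Y2a)
    (hE2r : ∀ ω, E2 ω = 0 ∨ E2 ω = 1) (hY2ar : ∀ ω, Y2a ω = 0 ∨ Y2a ω = 1)
    (hconsE1 : ∀ᵐ ω ∂μ, A ω = a → E1 ω = E1a ω)
    (hconsE2 : ∀ᵐ ω ∂μ, A ω = a → E1 ω = 0 → E2 ω = E2a ω)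
    (hconsY2 : ∀ᵐ ω ∂μ, A ω = a → E1 ω = 0 → E2 ω = 1 → DY2 ω = Y2a ω)
    (hnecE2 : ∀ᵐ ω ∂μ, E2 ω = 0 → DY2 ω = 0)
    (hexch : IndepFun A (fun ω => (E1a ω, E2a ω, Y2a ω)) μ) (hpos : μ {ω | A ω = a} ≠ 0)
    (heeCond : IndepFun E1a Y2a (μ[|{ω | E2a ω = 1}])) (heeE2 : IndepFun E2a Y2a μ) :
    ∫ ω in {ω | E1 ω = 0}, DY2 ω ∂μ[|{ω | A ω = a}] =
      (∫ ω, Y2a ω ∂μ) * μ.real {ω | E2a ω = 1 ∧ E1a ω = 0} := by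
  set C := {ω | E2a ω = 1}
  set F := {ω | E1a ω = 0}
  set Y := {ω | Y2a ω = 1}
  have hC : MeasurableSet C := hE2am (measurableSet_singleton 1)
  have hF : MeasurableSet F := hE1am (measurableSet_singleton 0)
  have hY : MeasurableSet Y := hY2am (measurableSet_singleton 1)
  have hcondA : μ[C ∩ F ∩ Y | {ω | A ω = a}] = μ (C ∩ F ∩ Y) :=
    hexch.cond_preimage_eq (t := {p | p.2.1 = 1} ∩ {p | p.1 = 0} ∩ {p | p.2.2 = 1}) hAm
      (measurableSet_singleton a) (by measurability) hpos
  have hee : μ (C ∩ F ∩ Y) = μ (C ∩ F) * μ Y :=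
    measure_inter_inter_eq_mul_of_cond_eq_mul hC
      (heeCond.measure_inter_preimage_eq_mul {0} {1} (measurableSet_singleton 0)
        (measurableSet_singleton 1))
      (heeE2.measure_inter_preimage_eq_mul {1} {1} (measurableSet_singleton 1)
        (measurableSet_singleton 1))
  have hA : MeasurableSet {ω | A ω = a} := hAm (measurableSet_singleton a)
  have hE1 : MeasurableSet {ω | E1 ω = 0} := hE1m (measurableSet_singleton 0)
  rw [setIntegral_cond_eq_measureReal_of_ae_eq_indicator hA hE1 ((hC.inter hF).inter hY)
      (indicator_unexposed_ae_eq hE2r hY2ar hconsE1 hconsE2 hconsY2 hnecE2),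
    integral_eq_measureReal_of_forall_eq_zero_or_eq_one hY2am hY2ar, measureReal_def, hcondA,
    hee, ENNReal.toReal_mul, mul_comm]
  rfl

lemma measure_setOf_eq_ne_zero_of_measureReal_pos_of_lt_one [IsProbabilityMeasure μ]
    {A : Ω → ℝ} (hAm : Measurable A) (hAr : ∀ ω, A ω = 0 ∨ A ω = 1)
    (hpos : 0 < μ.real {ω | A ω = 1}) (hlt : μ.real {ω | A ω = 1} < 1) :
    ∀ a ∈ ({0, 1} : Set ℝ), μ {ω | A ω = a} ≠ 0 := by
  have h1 : MeasurableSet {ω | A ω = 1} := hAm (measurableSet_singleton 1)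
  have hcompl : {ω | A ω = 0} = {ω | A ω = 1}ᶜ := by
    ext ω; rcases hAr ω with h | h <;> simp [h]
  rintro a (rfl | rfl)
  · rw [← measureReal_ne_zero_iff, hcompl, probReal_compl_eq_one_sub h1]
    linarith
  · exact (measureReal_ne_zero_iff).mp hpos.ne'

end

theorem second_interval_incidence_unexposed_general
    {Ω : Type*} [MeasurableSpace Ω] (μ : Measure Ω) [IsProbabilityMeasure μ]
    (A E1 E2 DY2 : Ω → ℝ)
    (E1p : ℝ → Ω → ℝ) (E2p Y1p Y2p Wp : ℝ → ℝ → Ω → ℝ)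
    (hAm : Measurable A) (hE1m : Measurable E1)
    (hE1pm : ∀ a ∈ ({0, 1} : Set ℝ), Measurable (E1p a))
    (hE2pm : ∀ a ∈ ({0, 1} : Set ℝ), ∀ e1 ∈ ({0, 1} : Set ℝ), Measurable (E2p a e1))
    (hY2pm : ∀ a ∈ ({0, 1} : Set ℝ), ∀ e2 ∈ ({0, 1} : Set ℝ), Measurable (Y2p a e2))
    (hAr : ∀ ω, A ω = 0 ∨ A ω = 1)
    (hE2r : ∀ ω, E2 ω = 0 ∨ E2 ω = 1)
    (hY2pr : ∀ a ∈ ({0, 1} : Set ℝ), ∀ e2 ∈ ({0, 1} : Set ℝ), ∀ ω,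
      Y2p a e2 ω = 0 ∨ Y2p a e2 ω = 1)
    -- Consistency
    (hconsE1 : ∀ a ∈ ({0, 1} : Set ℝ), ∀ᵐ ω ∂μ, A ω = a → E1 ω = E1p a ω)
    (hconsE2 : ∀ a ∈ ({0, 1} : Set ℝ), ∀ e1 ∈ ({0, 1} : Set ℝ),
      ∀ᵐ ω ∂μ, A ω = a → E1 ω = e1 → E2 ω = E2p a e1 ω)
    (hconsY2 : ∀ a ∈ ({0, 1} : Set ℝ), ∀ e2 ∈ ({0, 1} : Set ℝ),
      ∀ᵐ ω ∂μ, A ω = a → E1 ω = 0 → E2 ω = e2 → DY2 ω = Y2p a e2 ω)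
    -- Exposure necessity
    (hnecE2 : ∀ᵐ ω ∂μ, E2 ω = 0 → DY2 ω = 0)
    -- Treatment exchangeability
    (hexch : IndepFun A (fun ω => ![E1p 0 ω, E1p 1 ω,
      E2p 0 0 ω, E2p 0 1 ω, E2p 1 0 ω, E2p 1 1 ω,
      Y1p 0 0 ω, Y1p 0 1 ω, Y1p 1 0 ω, Y1p 1 1 ω,
      Y2p 0 0 ω, Y2p 0 1 ω, Y2p 1 0 ω, Y2p 1 1 ω,
      Wp 0 0 ω, Wp 0 1 ω, Wp 1 0 ω, Wp 1 1 ω]) μ)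
    -- Positivity
    (hpos : 0 < (μ {ω | A ω = 1}).toReal ∧ (μ {ω | A ω = 1}).toReal < 1)
    -- Exposure exchangeability
    (heeY2cond : ∀ a ∈ ({0, 1} : Set ℝ), ∀ e2 ∈ ({0, 1} : Set ℝ), ∀ e ∈ ({0, 1} : Set ℝ),
      IndepFun (E1p a) (Y2p a e2) (μ[|{ω | E2p a 0 ω = e}]))
    (heeE2 : ∀ a ∈ ({0, 1} : Set ℝ), ∀ e2 ∈ ({0, 1} : Set ℝ), IndepFun (E2p a 0) (Y2p a e2) μ)
    :
    ∀ a ∈ ({0, 1} : Set ℝ),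
      (∫ ω in {ω | E1 ω = 0}, DY2 ω ∂(μ[|{ω | A ω = a}])) =
        (∫ ω, Y2p a 1 ω ∂μ) * (μ {ω | E2p a 0 ω = 1 ∧ E1p a ω = 0}).toReal := by
  intro a ha
  have h0 : (0 : ℝ) ∈ ({0, 1} : Set ℝ) := by simp
  have h1 : (1 : ℝ) ∈ ({0, 1} : Set ℝ) := by simp
  have hexch_a : IndepFun A (fun ω => (E1p a ω, E2p a 0 ω, Y2p a 1 ω)) μ := by
    rcases ha with rfl | rfl
    · exact hexch.comp measurable_id ((measurable_pi_apply 0).prodMk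
        ((measurable_pi_apply 2).prodMk (measurable_pi_apply 11)))
    · exact hexch.comp measurable_id ((measurable_pi_apply 1).prodMk
        ((measurable_pi_apply 4).prodMk (measurable_pi_apply 13)))
  exact setIntegral_cond_unexposed_eq hAm hE1m (hE1pm a ha) (hE2pm a ha 0 h0)
    (hY2pm a ha 1 h1) hE2r (hY2pr a ha 1 h1) (hconsE1 a ha) (hconsE2 a ha 0 h0)
    (hconsY2 a ha 1 h1) hnecE2 hexch_a
    (measure_setOf_eq_ne_zero_of_measureReal_pos_of_lt_one hAm hAr hpos.1 hpos.2 a ha)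
    (heeY2cond a ha 1 h1 1 h1) (heeE2 a ha 1 h1)

/-- Decomposition of second-interval incidence among the time-1 unexposed. -/
theorem second_interval_incidence_unexposed
    {Ω : Type*} [MeasurableSpace Ω] (μ : Measure Ω) [IsProbabilityMeasure μ]
    (A E1 E2 DY1 DY2 : Ω → ℝ)
    (E1p : ℝ → Ω → ℝ) (E2p Y1p Y2p Wp : ℝ → ℝ → Ω → ℝ)
    (hAm : Measurable A) (hE1m : Measurable E1) (hE2m : Measurable E2)
    (hDY1m : Measurable DY1) (hDY2m : Measurable DY2)
    (hE1pm : ∀ a ∈ ({0, 1} : Set ℝ), Measurable (E1p a))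
    (hE2pm : ∀ a ∈ ({0, 1} : Set ℝ), ∀ e1 ∈ ({0, 1} : Set ℝ), Measurable (E2p a e1))
    (hY1pm : ∀ a ∈ ({0, 1} : Set ℝ), ∀ e1 ∈ ({0, 1} : Set ℝ), Measurable (Y1p a e1))
    (hY2pm : ∀ a ∈ ({0, 1} : Set ℝ), ∀ e2 ∈ ({0, 1} : Set ℝ), Measurable (Y2p a e2))
    (hWpm : ∀ a ∈ ({0, 1} : Set ℝ), ∀ e1 ∈ ({0, 1} : Set ℝ), Measurable (Wp a e1))
    (hAr : ∀ ω, A ω = 0 ∨ A ω = 1) (hE1r : ∀ ω, E1 ω = 0 ∨ E1 ω = 1)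
    (hE2r : ∀ ω, E2 ω = 0 ∨ E2 ω = 1)
    (hDY1r : ∀ ω, DY1 ω = 0 ∨ DY1 ω = 1) (hDY2r : ∀ ω, DY2 ω = 0 ∨ DY2 ω = 1)
    (hE1pr : ∀ a ∈ ({0, 1} : Set ℝ), ∀ ω, E1p a ω = 0 ∨ E1p a ω = 1)
    (hE2pr : ∀ a ∈ ({0, 1} : Set ℝ), ∀ e1 ∈ ({0, 1} : Set ℝ), ∀ ω,
      E2p a e1 ω = 0 ∨ E2p a e1 ω = 1)
    (hY1pr : ∀ a ∈ ({0, 1} : Set ℝ), ∀ e1 ∈ ({0, 1} : Set ℝ), ∀ ω,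
      Y1p a e1 ω = 0 ∨ Y1p a e1 ω = 1)
    (hY2pr : ∀ a ∈ ({0, 1} : Set ℝ), ∀ e2 ∈ ({0, 1} : Set ℝ), ∀ ω,
      Y2p a e2 ω = 0 ∨ Y2p a e2 ω = 1)
    (hWpr : ∀ a ∈ ({0, 1} : Set ℝ), ∀ e1 ∈ ({0, 1} : Set ℝ), ∀ ω,
      Wp a e1 ω = 0 ∨ Wp a e1 ω = 1)
    (hmono : ∀ ω, DY1 ω = 1 → DY2 ω = 0)
    -- Consistency
    (hconsE1 : ∀ a ∈ ({0, 1} : Set ℝ), ∀ᵐ ω ∂μ, A ω = a → E1 ω = E1p a ω)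
    (hconsY1 : ∀ a ∈ ({0, 1} : Set ℝ), ∀ e1 ∈ ({0, 1} : Set ℝ),
      ∀ᵐ ω ∂μ, A ω = a → E1 ω = e1 → DY1 ω = Y1p a e1 ω)
    (hconsE2 : ∀ a ∈ ({0, 1} : Set ℝ), ∀ e1 ∈ ({0, 1} : Set ℝ),
      ∀ᵐ ω ∂μ, A ω = a → E1 ω = e1 → E2 ω = E2p a e1 ω)
    (hconsY2 : ∀ a ∈ ({0, 1} : Set ℝ), ∀ e2 ∈ ({0, 1} : Set ℝ),
      ∀ᵐ ω ∂μ, A ω = a → E1 ω = 0 → E2 ω = e2 → DY2 ω = Y2p a e2 ω)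
    (hconsW : ∀ a ∈ ({0, 1} : Set ℝ), ∀ e1 ∈ ({0, 1} : Set ℝ),
      ∀ᵐ ω ∂μ, A ω = a → E1 ω = e1 → DY1 ω = 0 → E2 ω = 1 → DY2 ω = Wp a e1 ω)
    -- Exposure necessity
    (hnecY1 : ∀ a ∈ ({0, 1} : Set ℝ), ∀ᵐ ω ∂μ, Y1p a 0 ω = 0)
    (hnecY2 : ∀ a ∈ ({0, 1} : Set ℝ), ∀ᵐ ω ∂μ, Y2p a 0 ω = 0)
    (hnecE2 : ∀ᵐ ω ∂μ, E2 ω = 0 → DY2 ω = 0)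
    -- Treatment exchangeability
    (hexch : IndepFun A (fun ω => ![E1p 0 ω, E1p 1 ω,
      E2p 0 0 ω, E2p 0 1 ω, E2p 1 0 ω, E2p 1 1 ω,
      Y1p 0 0 ω, Y1p 0 1 ω, Y1p 1 0 ω, Y1p 1 1 ω,
      Y2p 0 0 ω, Y2p 0 1 ω, Y2p 1 0 ω, Y2p 1 1 ω,
      Wp 0 0 ω, Wp 0 1 ω, Wp 1 0 ω, Wp 1 1 ω]) μ)
    -- Positivity
    (hpos : 0 < (μ {ω | A ω = 1}).toReal ∧ (μ {ω | A ω = 1}).toReal < 1)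
    -- Exposure exchangeability
    (heeY1 : ∀ a ∈ ({0, 1} : Set ℝ), ∀ e1 ∈ ({0, 1} : Set ℝ), IndepFun (E1p a) (Y1p a e1) μ)
    (heeY2cond : ∀ a ∈ ({0, 1} : Set ℝ), ∀ e2 ∈ ({0, 1} : Set ℝ), ∀ e ∈ ({0, 1} : Set ℝ),
      IndepFun (E1p a) (Y2p a e2) (μ[|{ω | E2p a 0 ω = e}]))
    (heeE2 : ∀ a ∈ ({0, 1} : Set ℝ), ∀ e2 ∈ ({0, 1} : Set ℝ), IndepFun (E2p a 0) (Y2p a e2) μ)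
    :
    ∀ a ∈ ({0, 1} : Set ℝ),
      (∫ ω in {ω | E1 ω = 0}, DY2 ω ∂(μ[|{ω | A ω = a}])) =
        (∫ ω, Y2p a 1 ω ∂μ) * (μ {ω | E2p a 0 ω = 1 ∧ E1p a ω = 0}).toReal :=
  second_interval_incidence_unexposed_general μ A E1 E2 DY2 E1p E2p Y1p Y2p Wp hAm hE1m hE1pm hE2pm
    hY2pm hAr hE2r hY2pr hconsE1 hconsE2 hconsY2 hnecE2 hexch hpos heeY2cond heeE2
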